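/- Let q̃ : ℝ → ℝ solve the ODE q̃'(t) = √(1 - 2V(q̃(t))) with q̃(0) = q₀, where V : ℝ → ℝ is continuous, 0 ≤ V < 1/2 everywhere, V(q₀)=0, and V > 0 on (q₀, q₀+ε) for some ε > 0. Then q̃(t) < q₀ + t for all t > 0. -/
import Mathlib


theorem stmt_2 (V : ℝ → ℝ) (hVc : Continuous V)
    (hV : ∀ x, 0 ≤ V x ∧ V x < 1/2)
    (q₀ : ℝ) (hVq₀ : V q₀ = 0)
    (hVpos : ∃ ε > 0, ∀ x ∈ Set.Ioo q₀ (q₀ + ε), V x > 0)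
    (qt : ℝ → ℝ) (hdiff : Differentiable ℝ qt) (h0 : qt 0 = q₀)
    (hode : ∀ t, deriv qt t = Real.sqrt (1 - 2 * V (qt t))) :
    ∀ t > 0, qt t < q₀ + t := by
  -- f t = q₀ + t - qt t is monotone
  set f : ℝ → ℝ := fun t => q₀ + t - qt t with hf
  have hfd : Differentiable ℝ f := by
    apply Differentiable.sub _ hdiff
    exact (differentiable_const _).add differentiable_id
  have hderiv : ∀ t, deriv f t = 1 - Real.sqrt (1 - 2 * V (qt t)) := by
    intro t
    have : deriv f t = deriv (fun t => q₀ + t) t - deriv qt t := by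
      apply deriv_sub _ (hdiff t)
      exact ((differentiable_const _).add differentiable_id) t
    rw [this, hode, deriv_const_add]
    rw [deriv_id'']
  have hmono : Monotone f := by
    apply monotone_of_deriv_nonneg hfd
    intro t
    rw [hderiv t]
    have h1 : Real.sqrt (1 - 2 * V (qt t)) ≤ 1 := by
      rw [Real.sqrt_le_one]
      have := (hV (qt t)).1; linarith
    linarith
  have hf0 : f 0 = 0 := by simp [hf, h0]
  intro t ht
  have hft : 0 ≤ f t := hf0 ▸ hmono ht.le
  rcases lt_or_eq_of_le hft with h | h
  · simp only [hf] at h; linarith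
  -- f t = 0 case: f ≡ 0 on [0,t], leads to contradiction
  exfalso
  obtain ⟨ε, hε, hεpos⟩ := hVpos
  have hzero : ∀ s ∈ Set.Icc (0:ℝ) t, qt s = q₀ + s := by
    intro s hs
    have h1 : f s ≤ f t := hmono hs.2
    have h2 : f 0 ≤ f s := hmono hs.1
    have : f s = 0 := by linarith [h.symm ▸ h1, hf0 ▸ h2]
    simp only [hf] at this; linarith
  set s := min ε t / 2 with hs
  have hs0 : 0 < s := by positivity
  have hsε : s < ε := by
    have := min_le_left ε t; simp [hs]; linarith [min_le_left ε t]
  have hst : s < t := by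
    have := min_le_right ε t
    have : min ε t / 2 < min ε t := by
      have := lt_min hε ht; linarith [lt_min hε ht]
    linarith [min_le_right ε t]
  -- deriv qt s = 1 since qt = q₀ + · near s
  have heq : qt =ᶠ[nhds s] fun x => q₀ + x := by
    filter_upwards [Ioo_mem_nhds (show (0:ℝ) < s from hs0) hst] with x hx
    exact hzero x ⟨hx.1.le, hx.2.le⟩
  have hd1 : deriv qt s = 1 := by
    rw [heq.deriv_eq, deriv_const_add, deriv_id'']
  rw [hode s, hzero s ⟨hs0.le, hst.le⟩] at hd1
  have hV0 : V (q₀ + s) = 0 := by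
    have h1 : 1 - 2 * V (q₀ + s) = 1 := (Real.sqrt_eq_one.mp hd1)
    linarith
  have := hεpos (q₀ + s) ⟨by linarith, by linarith⟩
  linarith
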